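/- arXiv:math/0606151 — 2 statements merged into one kernel-verified Lean document; each statement's English description precedes it below -/
import Mathlib

section
/- Let N ≥ 2, let λ ∈ (−N, 0], and let Ω ⊂ ℝ^N be a smooth bounded domain containing the origin. Then there exist positive constants d₁, d₂ (depending only on N and λ) such that for every x ∈ Ω and every r > 0, d₁ · r^N · (|x| + r)^λ ≤ ∫_{B(x,r)} |y|^λ dy ≤ d₂ · r^N · (|x| + r)^λ. -/
/-!
Write `d = dim E`. On `B(x, r)` we have `|y| < |x| + r`, so for `λ ≤ 0` the weight is at least
`(|x| + r)^λ`, which gives the lower bound. For the upper bound, if `|x| ≤ 2r` then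
`B(x, r) ⊆ B(0, 3r)`, and by scaling `∫_{B(0,3r)} |y|^λ = (3r)^(d+λ) ∫_{B(0,1)} |y|^λ`, the last
integral being finite because `λ > -d`. If `|x| > 2r` then `|y| ≥ (|x| + r)/3` on `B(x, r)`, so the
weight is at most `3^(-λ) (|x| + r)^λ` there.
-/

open MeasureTheory Real

noncomputable section

/-- A set `Ω ⊆ ℝ^N` is a C² domain: it is the sublevel set of a C² function whose
differential does not vanish on the boundary. -/
def IsC2Domain {N : ℕ} (Ω : Set (EuclideanSpace ℝ (Fin N))) : Prop :=
  ∃ φ : EuclideanSpace ℝ (Fin N) → ℝ,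
    ContDiff ℝ 2 φ ∧ Ω = {x | φ x < 0} ∧ ∀ x ∈ frontier Ω, fderiv ℝ φ x ≠ 0

/-- Distance to the boundary of `Ω`. -/
def bdist {N : ℕ} (Ω : Set (EuclideanSpace ℝ (Fin N))) (x : EuclideanSpace ℝ (Fin N)) : ℝ :=
  Metric.infDist x (frontier Ω)

open Metric Module

variable {E : Type*} [NormedAddCommGroup E] [NormedSpace ℝ E] [FiniteDimensional ℝ E]
  [MeasurableSpace E] [BorelSpace E] (μ : Measure E) [μ.IsAddHaarMeasure] {lam : ℝ}

theorem addHaar_real_ball_of_pos (x : E) {r : ℝ} (hr : 0 < r) :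
    μ.real (ball x r) = r ^ finrank ℝ E * μ.real (ball 0 1) := by
  rw [measureReal_def, Measure.addHaar_ball_of_pos μ x hr, ENNReal.toReal_mul,
    ENNReal.toReal_ofReal (by positivity), measureReal_def]

theorem integrableOn_norm_rpow_ball [Nontrivial E] (hlam : -(finrank ℝ E : ℝ) < lam)
    (x : E) (r : ℝ) : IntegrableOn (fun y ↦ ‖y‖ ^ lam) (ball x r) μ := by
  have hloc : LocallyIntegrable (fun y : E ↦ ‖y‖ ^ lam) μ :=
    locallyIntegrable_of_norm_le_rpow (C := 1) (α := -lam) finrank_pos (by linarith)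
      (ae_of_all _ fun y ↦ by simp [abs_rpow_of_nonneg (norm_nonneg y)])
      (by fun_prop : Measurable fun y : E ↦ ‖y‖ ^ lam).aestronglyMeasurable
  exact (hloc.integrableOn_isCompact (isCompact_closedBall x r)).mono_set ball_subset_closedBall

theorem setIntegral_norm_rpow_ball_zero {R : ℝ} (hR : 0 < R) :
    ∫ y in ball 0 R, ‖y‖ ^ lam ∂μ
      = R ^ finrank ℝ E * R ^ lam * ∫ y in ball 0 1, ‖y‖ ^ lam ∂μ := by
  have hscale := Measure.setIntegral_comp_smul_of_pos μ (fun y : E ↦ ‖y‖ ^ lam) (ball 0 1) hR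
  simp only [smul_unitBall_of_pos hR, norm_smul, norm_of_nonneg hR.le,
    mul_rpow hR.le (norm_nonneg _), integral_const_mul, smul_eq_mul] at hscale
  rw [mul_assoc, hscale, mul_inv_cancel_left₀ (by positivity)]

theorem mul_pow_mul_rpow_le_setIntegral_norm_rpow_ball [Nontrivial E]
    (hlam₁ : -(finrank ℝ E : ℝ) < lam) (hlam₂ : lam ≤ 0) (x : E) {r : ℝ} (hr : 0 < r) :
    μ.real (ball 0 1) * r ^ finrank ℝ E * (‖x‖ + r) ^ lam ≤ ∫ y in ball x r, ‖y‖ ^ lam ∂μ := by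
  have hweight : ∀ᵐ y ∂μ, y ∈ ball x r → (‖x‖ + r) ^ lam ≤ ‖y‖ ^ lam := by
    filter_upwards [Measure.ae_ne μ 0] with y hy0 hy
    exact rpow_le_rpow_of_nonpos (norm_pos_iff.2 hy0) (norm_lt_of_mem_ball hy).le hlam₂
  calc μ.real (ball 0 1) * r ^ finrank ℝ E * (‖x‖ + r) ^ lam
      = ∫ _ in ball x r, (‖x‖ + r) ^ lam ∂μ := by
        rw [setIntegral_const, addHaar_real_ball_of_pos μ x hr, smul_eq_mul]; ring
    _ ≤ ∫ y in ball x r, ‖y‖ ^ lam ∂μ :=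
        setIntegral_mono_on_ae (integrableOn_const measure_ball_lt_top.ne)
          (integrableOn_norm_rpow_ball μ hlam₁ x r) measurableSet_ball hweight

theorem setIntegral_norm_rpow_ball_le_of_norm_le_two_mul [Nontrivial E]
    (hlam₁ : -(finrank ℝ E : ℝ) < lam) (hlam₂ : lam ≤ 0) {x : E} {r : ℝ} (hr : 0 < r)
    (hx : ‖x‖ ≤ 2 * r) :
    ∫ y in ball x r, ‖y‖ ^ lam ∂μ
      ≤ 3 ^ finrank ℝ E * (∫ y in ball 0 1, ‖y‖ ^ lam ∂μ) * r ^ finrank ℝ E * (‖x‖ + r) ^ lam := by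
  have hsub : ball x r ⊆ ball 0 (3 * r) :=
    ball_subset_ball' (by rw [dist_zero_right]; linarith)
  have hunit : 0 ≤ ∫ y in ball (0 : E) 1, ‖y‖ ^ lam ∂μ :=
    setIntegral_nonneg measurableSet_ball fun y _ ↦ by positivity
  calc ∫ y in ball x r, ‖y‖ ^ lam ∂μ
      ≤ ∫ y in ball 0 (3 * r), ‖y‖ ^ lam ∂μ :=
        setIntegral_mono_set (integrableOn_norm_rpow_ball μ hlam₁ 0 (3 * r))
          (ae_of_all _ fun y ↦ by positivity) hsub.eventuallyLE
    _ = (3 * r) ^ finrank ℝ E * (3 * r) ^ lam * ∫ y in ball 0 1, ‖y‖ ^ lam ∂μ :=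
        setIntegral_norm_rpow_ball_zero μ (by positivity)
    _ ≤ (3 * r) ^ finrank ℝ E * (‖x‖ + r) ^ lam * ∫ y in ball 0 1, ‖y‖ ^ lam ∂μ := by
        refine mul_le_mul_of_nonneg_right (mul_le_mul_of_nonneg_left ?_ (by positivity)) hunit
        exact rpow_le_rpow_of_nonpos (by positivity) (by linarith) hlam₂
    _ = _ := by rw [mul_pow]; ring

theorem setIntegral_norm_rpow_ball_le_of_two_mul_lt_norm (hlam : lam ≤ 0) {x : E} {r : ℝ}
    (hr : 0 < r) (hx : 2 * r < ‖x‖) :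
    ∫ y in ball x r, ‖y‖ ^ lam ∂μ
      ≤ 3 ^ (-lam) * μ.real (ball 0 1) * r ^ finrank ℝ E * (‖x‖ + r) ^ lam := by
  have hweight : ∀ y ∈ ball x r, ‖y‖ ^ lam ≤ 3 ^ (-lam) * (‖x‖ + r) ^ lam := by
    intro y hy
    have hxy : ‖x‖ - ‖y‖ < r := (norm_sub_norm_le x y).trans_lt (mem_ball_iff_norm'.1 hy)
    calc ‖y‖ ^ lam ≤ ((‖x‖ + r) / 3) ^ lam :=
          rpow_le_rpow_of_nonpos (by positivity) (by linarith) hlam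
      _ = 3 ^ (-lam) * (‖x‖ + r) ^ lam := by
          rw [div_rpow (by positivity) (by norm_num), rpow_neg (by norm_num)]; ring
  calc ∫ y in ball x r, ‖y‖ ^ lam ∂μ
      ≤ ∫ _ in ball x r, 3 ^ (-lam) * (‖x‖ + r) ^ lam ∂μ :=
        integral_mono_of_nonneg (ae_of_all _ fun y ↦ by positivity)
          (integrableOn_const measure_ball_lt_top.ne)
          ((ae_restrict_iff' measurableSet_ball).2 (ae_of_all _ hweight))
    _ = _ := by rw [setIntegral_const, addHaar_real_ball_of_pos μ x hr, smul_eq_mul]; ring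

theorem exists_setIntegral_norm_rpow_ball_comparable (hlam₁ : -(finrank ℝ E : ℝ) < lam)
    (hlam₂ : lam ≤ 0) :
    ∃ d₁ d₂ : ℝ, 0 < d₁ ∧ 0 < d₂ ∧ ∀ x : E, ∀ r : ℝ, 0 < r →
      d₁ * r ^ finrank ℝ E * (‖x‖ + r) ^ lam ≤ ∫ y in ball x r, ‖y‖ ^ lam ∂μ ∧
      ∫ y in ball x r, ‖y‖ ^ lam ∂μ ≤ d₂ * r ^ finrank ℝ E * (‖x‖ + r) ^ lam := by
  have : Nontrivial E :=
    nontrivial_of_finrank_pos (R := ℝ) (by exact_mod_cast (by linarith : (0 : ℝ) < finrank ℝ E))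
  set v := μ.real (ball (0 : E) 1)
  set K := ∫ y in ball (0 : E) 1, ‖y‖ ^ lam ∂μ
  have hv : 0 < v := ENNReal.toReal_pos (measure_ball_pos μ 0 one_pos).ne' measure_ball_lt_top.ne
  have hK : 0 ≤ K := setIntegral_nonneg measurableSet_ball fun y _ ↦ by positivity
  refine ⟨v, 3 ^ finrank ℝ E * K + 3 ^ (-lam) * v, hv, by positivity, fun x r hr ↦
    ⟨mul_pow_mul_rpow_le_setIntegral_norm_rpow_ball μ hlam₁ hlam₂ x hr, ?_⟩⟩
  rcases le_or_gt ‖x‖ (2 * r) with hnear | hfar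
  · refine (setIntegral_norm_rpow_ball_le_of_norm_le_two_mul μ hlam₁ hlam₂ hr hnear).trans ?_
    gcongr
    exact le_add_of_nonneg_right (by positivity)
  · refine (setIntegral_norm_rpow_ball_le_of_two_mul_lt_norm μ hlam₂ hr hfar).trans ?_
    gcongr
    exact le_add_of_nonneg_left (by positivity)

end

theorem volume_estimate_weight_rpow_general
    (N : ℕ) (lam : ℝ) (hlam₁ : -(N : ℝ) < lam) (hlam₂ : lam ≤ 0)
    (Ω : Set (EuclideanSpace ℝ (Fin N))) :
    ∃ d₁ d₂ : ℝ, 0 < d₁ ∧ 0 < d₂ ∧ ∀ x ∈ Ω, ∀ r : ℝ, 0 < r →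
      d₁ * r ^ N * (‖x‖ + r) ^ lam ≤ (∫ y in Metric.ball x r, ‖y‖ ^ lam) ∧
      (∫ y in Metric.ball x r, ‖y‖ ^ lam) ≤ d₂ * r ^ N * (‖x‖ + r) ^ lam := by
  obtain ⟨d₁, d₂, hd₁, hd₂, hbounds⟩ :=
    exists_setIntegral_norm_rpow_ball_comparable (volume : Measure (EuclideanSpace ℝ (Fin N)))
      (by rwa [finrank_euclideanSpace_fin]) hlam₂
  rw [finrank_euclideanSpace_fin] at hbounds
  exact ⟨d₁, d₂, hd₁, hd₂, fun x _ r hr ↦ hbounds x r hr⟩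

theorem volume_estimate_weight_rpow
    (N : ℕ) (hN : 2 ≤ N) (lam : ℝ) (hlam₁ : -(N : ℝ) < lam) (hlam₂ : lam ≤ 0)
    (Ω : Set (EuclideanSpace ℝ (Fin N))) (hΩo : IsOpen Ω) (hΩconn : IsConnected Ω)
    (hΩb : Bornology.IsBounded Ω) (hΩsm : IsC2Domain Ω)
    (h0 : (0 : EuclideanSpace ℝ (Fin N)) ∈ Ω) :
    ∃ d₁ d₂ : ℝ, 0 < d₁ ∧ 0 < d₂ ∧ ∀ x ∈ Ω, ∀ r : ℝ, 0 < r →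
      d₁ * r ^ N * (‖x‖ + r) ^ lam ≤ (∫ y in Metric.ball x r, ‖y‖ ^ lam) ∧
      (∫ y in Metric.ball x r, ‖y‖ ^ lam) ≤ d₂ * r ^ N * (‖x‖ + r) ^ lam :=
  volume_estimate_weight_rpow_general N lam hlam₁ hlam₂ Ω
end

section
/- Let N ≥ 3 and let Ω ⊂ ℝ^N be a smooth bounded domain containing the origin. Then there exists a positive constant C such that for every f ∈ C₀^∞(Ω), ∫_Ω |x|^{2−N} · f(x)² dx ≤ C · ∫_Ω |x|^{2−N} · |∇f(x)|² dx. -/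
open MeasureTheory Real

open Set Metric Filter

noncomputable section AuxPoincare


lemma integrableOn_weight {N : ℕ} (hN : 3 ≤ N) {R : ℝ} (hR : 0 < R) :
    IntegrableOn (fun x : EuclideanSpace ℝ (Fin N) => ‖x‖ ^ (2 - (N : ℝ)))
      (Metric.ball 0 R) volume := by
  set E := EuclideanSpace ℝ (Fin N)
  set s : ℝ := (N : ℝ) - 2 with hs
  have hs0 : 0 < s := by
    have : (3 : ℝ) ≤ (N : ℝ) := by exact_mod_cast hN
    simp only [hs]; linarith
  have hsN : s < (N : ℝ) := by simp only [hs]; linarith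
  have hmeas : Measurable fun x : E => ‖x‖ ^ (2 - (N : ℝ)) :=
    (measurable_norm).pow_const _
  have hnonneg : ∀ x : E, 0 ≤ ‖x‖ ^ (2 - (N : ℝ)) := fun x => rpow_nonneg (norm_nonneg _) _
  constructor
  · exact (hmeas.aestronglyMeasurable).restrict
  · rw [hasFiniteIntegral_iff_ofReal (Filter.Eventually.of_forall hnonneg)]
    set ν := volume.restrict (Metric.ball (0 : E) R)
    rw [lintegral_eq_lintegral_meas_le ν (Filter.Eventually.of_forall hnonneg)
      hmeas.aemeasurable.restrict]
    have hset : ∀ t : ℝ, 0 < t →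
        ν {a : E | t ≤ ‖a‖ ^ (2 - (N : ℝ))} ≤ volume (Metric.closedBall (0 : E) (t ^ (-s⁻¹))) := by
      intro t ht
      refine le_trans (Measure.restrict_le_self _) (measure_mono ?_)
      intro a ha
      simp only [mem_setOf_eq] at ha
      simp only [mem_closedBall, dist_zero_right]
      rcases eq_or_ne a 0 with rfl | ha0
      · simp only [norm_zero] at ha
        rw [zero_rpow (by linarith : 2 - (N:ℝ) ≠ 0)] at ha
        linarith
      · have hna : 0 < ‖a‖ := norm_pos_iff.2 ha0
        have h1 : (‖a‖ ^ (2 - (N : ℝ))) ^ (-s⁻¹) ≤ t ^ (-s⁻¹) := by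
          apply Real.rpow_le_rpow_of_nonpos ht ha
          simp only [Left.neg_nonpos_iff]
          positivity
        rw [← Real.rpow_mul (norm_nonneg a)] at h1
        have he : (2 - (N:ℝ)) * -s⁻¹ = 1 := by
          have hN2 : (N:ℝ) - 2 ≠ 0 := by linarith
          rw [hs, mul_neg, ← div_eq_mul_inv, neg_eq_iff_eq_neg, div_eq_iff hN2]; ring
        rwa [he, Real.rpow_one] at h1
    have hsub : ∀ t : ℝ, ν {a : E | t ≤ ‖a‖ ^ (2 - (N : ℝ))} ≤ volume (Metric.ball (0:E) R) := by
      intro t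
      refine le_trans (measure_mono (subset_univ _)) ?_
      rw [Measure.restrict_apply_univ]
    calc ∫⁻ t in Ioi (0:ℝ), ν {a : E | t ≤ ‖a‖ ^ (2 - (N : ℝ))}
        ≤ ∫⁻ t in Ioc (0:ℝ) 1 ∪ Ioi 1, ν {a : E | t ≤ ‖a‖ ^ (2 - (N : ℝ))} :=
          lintegral_mono_set Ioi_subset_Ioc_union_Ioi
      _ ≤ (∫⁻ t in Ioc (0:ℝ) 1, ν {a : E | t ≤ ‖a‖ ^ (2 - (N : ℝ))})
            + ∫⁻ t in Ioi (1:ℝ), ν {a : E | t ≤ ‖a‖ ^ (2 - (N : ℝ))} := lintegral_union_le _ _ _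
      _ < ⊤ := by
          refine ENNReal.add_lt_top.2 ⟨?_, ?_⟩
          · calc ∫⁻ t in Ioc (0:ℝ) 1, ν {a : E | t ≤ ‖a‖ ^ (2 - (N : ℝ))}
                ≤ ∫⁻ _ in Ioc (0:ℝ) 1, volume (Metric.ball (0:E) R) :=
                  setLIntegral_mono' measurableSet_Ioc fun t _ => hsub t
              _ = volume (Metric.ball (0:E) R) * volume (Ioc (0:ℝ) 1) := setLIntegral_const _ _
              _ < ⊤ := ENNReal.mul_lt_top measure_ball_lt_top (by simp)
          · have hbd : ∀ t ∈ Ioi (1:ℝ), ν {a : E | t ≤ ‖a‖ ^ (2 - (N : ℝ))} ≤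
                ENNReal.ofReal (t ^ (-s⁻¹ * (N:ℝ))) * volume (Metric.ball (0:E) 1) := by
              intro t ht
              have ht0 : 0 < t := lt_trans one_pos ht
              refine le_trans (hset t ht0) ?_
              rw [MeasureTheory.Measure.addHaar_closedBall _ _ (rpow_nonneg ht0.le _)]
              rw [finrank_euclideanSpace_fin, ← Real.rpow_natCast (t ^ (-s⁻¹)) N,
                ← Real.rpow_mul ht0.le]
            calc ∫⁻ t in Ioi (1:ℝ), ν {a : E | t ≤ ‖a‖ ^ (2 - (N : ℝ))}
                ≤ ∫⁻ t in Ioi (1:ℝ), ENNReal.ofReal (t ^ (-s⁻¹ * (N:ℝ))) * volume (Metric.ball (0:E) 1) :=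
                  setLIntegral_mono' measurableSet_Ioi hbd
              _ = (∫⁻ t in Ioi (1:ℝ), ENNReal.ofReal (t ^ (-s⁻¹ * (N:ℝ)))) * volume (Metric.ball (0:E) 1) := by
                  rw [lintegral_mul_const' _ _ measure_ball_lt_top.ne]
              _ < ⊤ := by
                  refine ENNReal.mul_lt_top ?_ measure_ball_lt_top
                  refine IntegrableOn.setLIntegral_lt_top ?_
                  refine integrableOn_Ioi_rpow_of_lt ?_ one_pos
                  rw [neg_mul, neg_lt_neg_iff, inv_mul_eq_div, lt_div_iff₀ hs0, one_mul]
                  exact hsN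



variable {N : ℕ}

local notation "E" => EuclideanSpace ℝ (Fin N)

lemma basis_sum_apply (L : E →L[ℝ] ℝ) (x : E) :
    ∑ i : Fin N, x i * L (EuclideanSpace.single i 1) = L x := by
  have hx : ∑ i : Fin N, x i • EuclideanSpace.single i (1:ℝ) = x := by
    have := (EuclideanSpace.basisFun (Fin N) ℝ).sum_repr x
    simpa only [EuclideanSpace.basisFun_apply, EuclideanSpace.basisFun_repr] using this
  calc ∑ i : Fin N, x i * L (EuclideanSpace.single i 1)
      = ∑ i : Fin N, L (x i • EuclideanSpace.single i 1) := by
        simp [_root_.map_smul]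
    _ = L x := by rw [← map_sum, hx]

variable (hN : 3 ≤ N)

lemma integral_fderiv_apply_zero' (h : E → ℝ) (hh : ContDiff ℝ 1 h)
    (hcs : HasCompactSupport h) (v : E) : ∫ x : E, fderiv ℝ h x v = 0 := by
  have hd : Differentiable ℝ h := hh.differentiable one_ne_zero
  have hfc : Continuous fun x : E => fderiv ℝ h x v :=
    (hh.continuous_fderiv one_ne_zero).clm_apply continuous_const
  have hfcs : HasCompactSupport fun x : E => fderiv ℝ h x v :=
    (hcs.fderiv (𝕜 := ℝ)).comp_left (g := fun L : E →L[ℝ] ℝ => L v) rfl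
  have hfi : Integrable (fun x : E => fderiv ℝ h x v) volume :=
    hfc.integrable_of_hasCompactSupport hfcs
  have h1 : Integrable (fun x : E => fderiv ℝ (fun _ : E => (1:ℝ)) x v * h x) volume := by
    have : (fun x : E => fderiv ℝ (fun _ : E => (1:ℝ)) x v * h x) = fun _ => 0 := by
      funext x; simp [fderiv_const]
    rw [this]; exact integrable_zero _ _ _
  have h2 : Integrable (fun x : E => (1:ℝ) * fderiv ℝ h x v) volume := by
    simpa only [one_mul] using hfi
  have h3 : Integrable (fun x : E => (1:ℝ) * h x) volume := by
    simpa only [one_mul] using hh.continuous.integrable_of_hasCompactSupport hcs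
  have key := integral_mul_fderiv_eq_neg_fderiv_mul_of_integrable
    (f := fun _ : E => (1:ℝ)) (g := h) (v := v) (μ := volume)
    h1 h2 h3 (fun x _ => differentiableAt_const (1:ℝ)) (fun x _ => hd x)
  simp only [one_mul, fderiv_fun_const, Pi.zero_apply, ContinuousLinearMap.zero_apply,
    zero_mul, integral_zero, neg_zero] at key
  exact key

lemma div_identity (u : E → ℝ) (hu : ContDiff ℝ (⊤ : ℕ∞) u) (hcs : HasCompactSupport u)
    {ε : ℝ} (hε : 0 < ε) :
    ∫ x : E, u x ^ 2 * (‖x‖ ^ 2 + ε ^ 2) ^ ((2 - (N:ℝ))/2 - 1) * (2 * ‖x‖ ^ 2 + (N:ℝ) * ε ^ 2)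
      = - ∫ x : E, 2 * u x * fderiv ℝ u x x * (‖x‖ ^ 2 + ε ^ 2) ^ ((2 - (N:ℝ))/2) := by
  set p : ℝ := (2 - (N:ℝ))/2 with hp
  set q : E → ℝ := fun x => ‖x‖ ^ 2 + ε ^ 2 with hq
  have hqpos : ∀ x : E, 0 < q x := fun x => by positivity
  have hud : ∀ x : E, HasFDerivAt u (fderiv ℝ u x) x :=
    fun x => (hu.differentiable (by simp) x).hasFDerivAt
  have hqd : ∀ x : E, HasFDerivAt q (2 • innerSL ℝ x) x := fun x => by
    simpa [hq] using ((hasStrictFDerivAt_norm_sq x).hasFDerivAt.add_const (ε ^ 2))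
  have hφd : ∀ x : E, HasFDerivAt (fun y => q y ^ p)
      ((p * q x ^ (p - 1)) • (2 • innerSL ℝ x)) x := fun x =>
    (Real.hasDerivAt_rpow_const (Or.inl (hqpos x).ne')).comp_hasFDerivAt x (hqd x)
  have hsq : ∀ x : E, HasFDerivAt (fun y => u y ^ 2) ((2 * u x) • fderiv ℝ u x) x := by
    intro x
    have h := (hud x).mul (hud x)
    have e1 : (u * u : E → ℝ) = fun y => u y ^ 2 := by funext y; rw [Pi.mul_apply]; ring
    rw [e1] at h
    refine h.congr_fderiv ?_
    rw [two_mul, add_smul]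
  -- the derivative of `u^2 * q^p`
  have h1 : ∀ x : E, HasFDerivAt (fun y => u y ^ 2 * q y ^ p)
      ((u x ^ 2) • ((p * q x ^ (p - 1)) • (2 • innerSL ℝ x))
        + (q x ^ p) • ((2 * u x) • fderiv ℝ u x)) x :=
    fun x => (hsq x).mul (hφd x)
  have hproj : ∀ (i : Fin N) (x : E), HasFDerivAt (fun y : E => y i)
      (EuclideanSpace.proj i : E →L[ℝ] ℝ) x := by
    intro i x
    have heq : ⇑(EuclideanSpace.proj (𝕜 := ℝ) (i := i)) = fun y : E => y i := by
      funext y; simp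
    have := (EuclideanSpace.proj (𝕜 := ℝ) (i := i)).hasFDerivAt (x := x)
    rwa [heq] at this
  have hg : ∀ (i : Fin N) (x : E), HasFDerivAt (fun y => u y ^ 2 * q y ^ p * y i)
      ((u x ^ 2 * q x ^ p) • (EuclideanSpace.proj i : E →L[ℝ] ℝ)
        + (x i) • ((u x ^ 2) • ((p * q x ^ (p - 1)) • (2 • innerSL ℝ x))
          + (q x ^ p) • ((2 * u x) • fderiv ℝ u x))) x :=
    fun i x => (h1 x).mul (hproj i x)
  -- pointwise divergence formula
  have hdiv : ∀ x : E,
      ∑ i : Fin N, fderiv ℝ (fun y => u y ^ 2 * q y ^ p * y i) x (EuclideanSpace.single i 1)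
        = 2 * u x * fderiv ℝ u x x * q x ^ p
          + u x ^ 2 * q x ^ (p - 1) * (2 * ‖x‖ ^ 2 + (N:ℝ) * ε ^ 2) := by
    intro x
    have hqp : q x ^ p = q x ^ (p - 1) * q x := by
      rw [← Real.rpow_add_one (hqpos x).ne' (p - 1), sub_add_cancel]
    calc ∑ i : Fin N, fderiv ℝ (fun y => u y ^ 2 * q y ^ p * y i) x (EuclideanSpace.single i 1)
        = ∑ i : Fin N, (u x ^ 2 * q x ^ p * (EuclideanSpace.proj (𝕜 := ℝ) (i := i)
            (EuclideanSpace.single i 1))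
          + x i * ((u x ^ 2) • ((p * q x ^ (p - 1)) • (2 • innerSL ℝ x))
            + (q x ^ p) • ((2 * u x) • fderiv ℝ u x)) (EuclideanSpace.single i 1)) := by
          refine Finset.sum_congr rfl fun i _ => ?_
          rw [(hg i x).fderiv]
          simp [ContinuousLinearMap.add_apply, ContinuousLinearMap.smul_apply, smul_eq_mul]
          ring
      _ = (N:ℝ) * (u x ^ 2 * q x ^ p)
          + ((u x ^ 2) • ((p * q x ^ (p - 1)) • (2 • innerSL ℝ x))
            + (q x ^ p) • ((2 * u x) • fderiv ℝ u x)) x := by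
          rw [Finset.sum_add_distrib, basis_sum_apply]
          congr 1
          simp [PiLp.proj_apply, EuclideanSpace.single_apply]
      _ = _ := by
          simp only [ContinuousLinearMap.add_apply, ContinuousLinearMap.smul_apply,
            smul_eq_mul, ContinuousLinearMap.coe_smul', Pi.smul_apply, innerSL_apply_apply]
          rw [real_inner_self_eq_norm_sq]
          rw [hqp, hq]
          simp only []
          rw [hp]
          ring
  -- regularity and support facts
  have hu1 : ContDiff ℝ 1 u := hu.of_le (by simp)
  have hqcd : ContDiff ℝ 1 q := (contDiff_norm_sq ℝ).add contDiff_const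
  have hφcd : ContDiff ℝ 1 fun x : E => q x ^ p :=
    hqcd.rpow_const_of_ne fun x => (hqpos x).ne'
  have hprojcd : ∀ i : Fin N, ContDiff ℝ 1 fun x : E => x i := by
    intro i
    have heq : ⇑(EuclideanSpace.proj (𝕜 := ℝ) (i := i)) = fun y : E => y i := by
      funext y; simp
    have := (EuclideanSpace.proj (𝕜 := ℝ) (i := i)).contDiff (n := 1)
    rwa [heq] at this
  have hgcd : ∀ i : Fin N, ContDiff ℝ 1 fun x : E => u x ^ 2 * q x ^ p * x i :=
    fun i => (((hu1.pow 2).mul hφcd).mul (hprojcd i))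
  have hgcs : ∀ i : Fin N, HasCompactSupport fun x : E => u x ^ 2 * q x ^ p * x i := by
    intro i
    have e : (fun x : E => u x ^ 2 * q x ^ p * x i)
        = fun x => u x * (u x * q x ^ p * x i) := by funext x; ring
    rw [e]; exact hcs.mul_right
  have hzero : ∀ i : Fin N,
      ∫ x : E, fderiv ℝ (fun y => u y ^ 2 * q y ^ p * y i) x (EuclideanSpace.single i 1) = 0 :=
    fun i => integral_fderiv_apply_zero' _ (hgcd i) (hgcs i) _
  have hint_i : ∀ i : Fin N, Integrable
      (fun x : E => fderiv ℝ (fun y => u y ^ 2 * q y ^ p * y i) x (EuclideanSpace.single i 1))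
      volume := by
    intro i
    refine (((hgcd i).continuous_fderiv one_ne_zero).clm_apply continuous_const).integrable_of_hasCompactSupport ?_
    exact ((hgcs i).fderiv (𝕜 := ℝ)).comp_left (g := fun L : E →L[ℝ] ℝ => L _) rfl
  have hsum : (∫ x : E, ∑ i : Fin N,
      fderiv ℝ (fun y => u y ^ 2 * q y ^ p * y i) x (EuclideanSpace.single i 1)) = 0 := by
    rw [integral_finset_sum Finset.univ fun i _ => hint_i i]
    exact Finset.sum_eq_zero fun i _ => hzero i
  rw [show (fun x : E => ∑ i : Fin N,
      fderiv ℝ (fun y => u y ^ 2 * q y ^ p * y i) x (EuclideanSpace.single i 1))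
    = fun x : E => 2 * u x * fderiv ℝ u x x * q x ^ p
        + u x ^ 2 * q x ^ (p - 1) * (2 * ‖x‖ ^ 2 + (N:ℝ) * ε ^ 2) from funext hdiv] at hsum
  -- integrability of the two terms
  have contA : Continuous fun x : E => fderiv ℝ u x x :=
    (hu.continuous_fderiv (by simp)).clm_apply continuous_id
  have contφ : Continuous fun x : E => q x ^ p := hφcd.continuous
  have contq1 : Continuous fun x : E => q x ^ (p - 1) :=
    hqcd.continuous.rpow_const fun x => Or.inl (hqpos x).ne'
  have hT1int : Integrable (fun x : E => 2 * u x * fderiv ℝ u x x * q x ^ p) volume := by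
    refine Continuous.integrable_of_hasCompactSupport
      (((continuous_const.mul hu.continuous).mul contA).mul contφ) ?_
    have e : (fun x : E => 2 * u x * fderiv ℝ u x x * q x ^ p)
        = fun x => u x * (2 * fderiv ℝ u x x * q x ^ p) := by funext x; ring
    rw [e]; exact hcs.mul_right
  have hT2int : Integrable
      (fun x : E => u x ^ 2 * q x ^ (p - 1) * (2 * ‖x‖ ^ 2 + (N:ℝ) * ε ^ 2)) volume := by
    refine Continuous.integrable_of_hasCompactSupport
      (((hu.continuous.pow 2).mul contq1).mul
        ((continuous_const.mul (continuous_norm.pow 2)).add continuous_const)) ?_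
    have e : (fun x : E => u x ^ 2 * q x ^ (p - 1) * (2 * ‖x‖ ^ 2 + (N:ℝ) * ε ^ 2))
        = fun x => u x * (u x * q x ^ (p - 1) * (2 * ‖x‖ ^ 2 + (N:ℝ) * ε ^ 2)) := by
      funext x; ring
    rw [e]; exact hcs.mul_right
  rw [integral_add hT1int hT2int] at hsum
  linarith

lemma integrable_weight_mul (hN : 3 ≤ N) {R : ℝ} (hR : 0 < R)
    (v : EuclideanSpace ℝ (Fin N) → ℝ) (hv : Continuous v)
    (hsupp : ∀ x : EuclideanSpace ℝ (Fin N), x ∉ closedBall (0:EuclideanSpace ℝ (Fin N)) R → v x = 0) :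
    Integrable (fun x : EuclideanSpace ℝ (Fin N) => ‖x‖ ^ (2 - (N:ℝ)) * v x) volume := by
  have hvcs : HasCompactSupport v := HasCompactSupport.intro (isCompact_closedBall _ _) hsupp
  obtain ⟨c, hc⟩ := hvcs.exists_bound_of_continuous hv
  have hw_int : IntegrableOn (fun x : EuclideanSpace ℝ (Fin N) => ‖x‖ ^ (2 - (N:ℝ)))
      (closedBall (0:EuclideanSpace ℝ (Fin N)) R) volume :=
    (integrableOn_weight hN (show (0:ℝ) < R + 1 by linarith)).mono_set
      (closedBall_subset_ball (by linarith))
  have hmeas : AEStronglyMeasurable (fun x : EuclideanSpace ℝ (Fin N) => ‖x‖ ^ (2 - (N:ℝ)) * v x)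
      volume := ((measurable_norm.pow_const _).mul hv.measurable).aestronglyMeasurable
  have heq : (fun x : EuclideanSpace ℝ (Fin N) => ‖x‖ ^ (2 - (N:ℝ)) * v x)
      = (closedBall (0:EuclideanSpace ℝ (Fin N)) R).indicator
          (fun x => ‖x‖ ^ (2 - (N:ℝ)) * v x) := by
    funext x
    by_cases hx : x ∈ closedBall (0:EuclideanSpace ℝ (Fin N)) R
    · rw [Set.indicator_of_mem hx]
    · rw [Set.indicator_of_notMem hx, hsupp x hx, mul_zero]
  rw [heq]
  refine IntegrableOn.integrable_indicator ?_ (measurableSet_closedBall)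
  refine Integrable.mono' (hw_int.const_mul c) hmeas.restrict ?_
  refine Filter.Eventually.of_forall fun x => ?_
  rw [Real.norm_eq_abs, abs_mul, abs_of_nonneg (Real.rpow_nonneg (norm_nonneg _) _)]
  calc ‖x‖ ^ (2 - (N:ℝ)) * |v x| ≤ ‖x‖ ^ (2 - (N:ℝ)) * c := by
        refine mul_le_mul_of_nonneg_left ?_ (Real.rpow_nonneg (norm_nonneg _) _)
        exact (le_abs_self _).trans ((abs_abs (v x)).le.trans ((Real.norm_eq_abs (v x)) ▸ hc x))
    _ = c * ‖x‖ ^ (2 - (N:ℝ)) := mul_comm _ _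


set_option maxHeartbeats 2000000 in
theorem poincare_weighted'
    (hN : 3 ≤ N)
    (Ω : Set E) (hΩb : Bornology.IsBounded Ω) :
    ∃ C : ℝ, 0 < C ∧
      ∀ f : E → ℝ,
        ContDiff ℝ (⊤ : ℕ∞) f → HasCompactSupport f → tsupport f ⊆ Ω →
        (∫ x in Ω, ‖x‖ ^ (2 - (N : ℝ)) * f x ^ 2) ≤
          C * ∫ x in Ω, ‖x‖ ^ (2 - (N : ℝ)) * ‖gradient f x‖ ^ 2 := by
  classical
  obtain ⟨r, hΩr⟩ := hΩb.subset_closedBall (0 : E)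
  set R : ℝ := max r 1 with hRdef
  have hR1 : (1:ℝ) ≤ R := le_max_right _ _
  have hR0 : (0:ℝ) < R := lt_of_lt_of_le one_pos hR1
  refine ⟨R ^ 2, by positivity, ?_⟩
  intro f hf hfcs hfsupp
  set p : ℝ := (2 - (N:ℝ))/2 with hp
  set w : E → ℝ := fun x => ‖x‖ ^ (2 - (N:ℝ)) with hw
  have hNR : (3:ℝ) ≤ (N:ℝ) := by exact_mod_cast hN
  have hp0 : p < 0 := by rw [hp]; linarith
  have h2p : 2 * p = 2 - (N:ℝ) := by rw [hp]; ring
  have hKR : tsupport f ⊆ closedBall (0:E) R :=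
    hfsupp.trans (hΩr.trans (closedBall_subset_closedBall (le_max_left _ _)))
  -- facts about the gradient
  have hgradcont : Continuous fun x : E => gradient f x := by
    exact (InnerProductSpace.toDual ℝ E).symm.continuous.comp (hf.continuous_fderiv (by simp))
  have hgradinner : ∀ x v : E, fderiv ℝ f x v = inner ℝ (gradient f x) v := by
    intro x v
    have h : InnerProductSpace.toDual ℝ E (gradient f x) = fderiv ℝ f x :=
      (InnerProductSpace.toDual ℝ E).apply_symm_apply _
    rw [← h, InnerProductSpace.toDual_apply_apply]
  have hgrad0 : ∀ x : E, x ∉ tsupport f → gradient f x = 0 := by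
    intro x hx
    have hfd : fderiv ℝ f x = 0 := by
      by_contra h
      exact hx (support_fderiv_subset (𝕜 := ℝ) (Function.mem_support.2 h))
    show (InnerProductSpace.toDual ℝ E).symm (fderiv ℝ f x) = 0
    rw [hfd, map_zero]
  have hf0 : ∀ x : E, x ∉ tsupport f → f x = 0 := fun x hx =>
    image_eq_zero_of_notMem_tsupport hx
  -- convert set integrals to integrals over the whole space
  rw [setIntegral_eq_integral_of_forall_compl_eq_zero
    (fun x hx => by rw [hf0 x fun h => hx (hfsupp h)]; ring)]
  rw [setIntegral_eq_integral_of_forall_compl_eq_zero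
    (fun x hx => by rw [hgrad0 x fun h => hx (hfsupp h)]; simp)]
  -- integrability facts
  have hw0 : ∀ x : E, 0 ≤ w x := fun x => Real.rpow_nonneg (norm_nonneg _) _
  have hsupp0 : ∀ (v : E → ℝ), (∀ x, x ∉ tsupport f → v x = 0) →
      ∀ x : E, x ∉ closedBall (0:E) R → v x = 0 :=
    fun v hv x hx => hv x fun h => hx (hKR h)
  have hA_int : Integrable (fun x : E => w x * f x ^ 2) volume :=
    integrable_weight_mul hN hR0 _ (hf.continuous.pow 2)
      (hsupp0 _ fun x hx => by rw [hf0 x hx]; ring)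
  have hB_int : Integrable (fun x : E => w x * ‖gradient f x‖ ^ 2) volume :=
    integrable_weight_mul hN hR0 _ ((hgradcont.norm).pow 2)
      (hsupp0 _ fun x hx => by rw [hgrad0 x hx]; simp)
  have hM_int : Integrable (fun x : E => w x * (|f x| * ‖gradient f x‖)) volume :=
    integrable_weight_mul hN hR0 _ ((hf.continuous.abs).mul hgradcont.norm)
      (hsupp0 _ fun x hx => by rw [hf0 x hx]; simp)
  -- almost every point is nonzero
  have h0ae : ∀ᵐ x : E ∂volume, x ≠ (0:E) := by
    haveI : Nontrivial E := by
      refine ⟨EuclideanSpace.single (⟨0, by omega⟩ : Fin N) (1:ℝ), 0, fun h => ?_⟩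
      have := congrArg (fun z : E => z ⟨0, by omega⟩) h
      simp [EuclideanSpace.single_apply] at this
    have hset : {x : E | ¬ x ≠ (0:E)} = {(0:E)} := by ext z; simp
    rw [ae_iff, hset]
    exact measure_singleton _
  -- the sequence of approximations
  set ee : ℕ → ℝ := fun n => 1/((n:ℝ)+1) with hee
  have hee0 : ∀ n, 0 < ee n := fun n => by rw [hee]; positivity
  set Sn : ℕ → E → ℝ := fun n x => f x ^ 2 * (‖x‖ ^ 2 + ee n ^ 2) ^ (p - 1) * (2 * ‖x‖ ^ 2)
    with hSn
  have contqn : ∀ n, Continuous fun x : E => (‖x‖ ^ 2 + ee n ^ 2) ^ (p - 1) := fun n =>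
    ((continuous_norm.pow 2).add continuous_const).rpow_const fun x =>
      Or.inl (ne_of_gt (by simp only [Pi.add_apply, Pi.pow_apply]; linarith [pow_pos (hee0 n) 2, sq_nonneg ‖x‖]))
  have contφn : ∀ n, Continuous fun x : E => (‖x‖ ^ 2 + ee n ^ 2) ^ p := fun n =>
    ((continuous_norm.pow 2).add continuous_const).rpow_const fun x =>
      Or.inl (ne_of_gt (by simp only [Pi.add_apply, Pi.pow_apply]; linarith [pow_pos (hee0 n) 2, sq_nonneg ‖x‖]))
  have hSn_int : ∀ n, Integrable (Sn n) volume := by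
    intro n
    refine Continuous.integrable_of_hasCompactSupport
      (((hf.continuous.pow 2).mul (contqn n)).mul (continuous_const.mul (continuous_norm.pow 2))) ?_
    have e : (Sn n) = fun x => f x * (f x * (‖x‖ ^ 2 + ee n ^ 2) ^ (p - 1) * (2 * ‖x‖ ^ 2)) := by
      funext x; simp only [hSn]; ring
    rw [e]; exact hfcs.mul_right
  have hRHS_int : ∀ n, Integrable
      (fun x : E => f x ^ 2 * (‖x‖ ^ 2 + ee n ^ 2) ^ (p - 1) * (2 * ‖x‖ ^ 2 + (N:ℝ) * ee n ^ 2))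
      volume := by
    intro n
    refine Continuous.integrable_of_hasCompactSupport
      (((hf.continuous.pow 2).mul (contqn n)).mul
        ((continuous_const.mul (continuous_norm.pow 2)).add continuous_const)) ?_
    have e : (fun x : E => f x ^ 2 * (‖x‖ ^ 2 + ee n ^ 2) ^ (p - 1)
          * (2 * ‖x‖ ^ 2 + (N:ℝ) * ee n ^ 2))
        = fun x => f x * (f x * (‖x‖ ^ 2 + ee n ^ 2) ^ (p - 1)
          * (2 * ‖x‖ ^ 2 + (N:ℝ) * ee n ^ 2)) := by
      funext x; ring
    rw [e]; exact hfcs.mul_right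
  have hT1_int : ∀ n, Integrable
      (fun x : E => 2 * f x * fderiv ℝ f x x * (‖x‖ ^ 2 + ee n ^ 2) ^ p) volume := by
    intro n
    have contA : Continuous fun x : E => fderiv ℝ f x x :=
      (hf.continuous_fderiv (by simp)).clm_apply continuous_id
    refine Continuous.integrable_of_hasCompactSupport
      (((continuous_const.mul hf.continuous).mul contA).mul (contφn n)) ?_
    have e : (fun x : E => 2 * f x * fderiv ℝ f x x * (‖x‖ ^ 2 + ee n ^ 2) ^ p)
        = fun x => f x * (2 * fderiv ℝ f x x * (‖x‖ ^ 2 + ee n ^ 2) ^ p) := by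
      funext x; ring
    rw [e]; exact hfcs.mul_right
  -- pointwise bound for the right-hand side
  have hbound : ∀ n, ∀ x : E, x ≠ 0 →
      -(2 * f x * fderiv ℝ f x x * (‖x‖ ^ 2 + ee n ^ 2) ^ p)
        ≤ 2 * R * (w x * (|f x| * ‖gradient f x‖)) := by
    intro n x hx
    by_cases hxK : x ∈ tsupport f
    · have hxR : ‖x‖ ≤ R := by
        have := hKR hxK
        simpa [mem_closedBall, dist_zero_right] using this
      have hAle : |fderiv ℝ f x x| ≤ ‖gradient f x‖ * ‖x‖ := by
        rw [hgradinner]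
        exact abs_real_inner_le_norm _ _
      have hφw : (‖x‖ ^ 2 + ee n ^ 2) ^ p ≤ w x := by
        have hx2 : (0:ℝ) < ‖x‖ ^ 2 := pow_pos (norm_pos_iff.2 hx) 2
        have h1 : (‖x‖ ^ 2 + ee n ^ 2) ^ p ≤ (‖x‖ ^ 2) ^ p := by
          refine Real.rpow_le_rpow_of_nonpos hx2 ?_ hp0.le
          have := hee0 n; nlinarith
        have h2 : ((‖x‖:ℝ) ^ 2) ^ p = w x := by
          rw [hw, ← Real.rpow_natCast ‖x‖ 2, ← Real.rpow_mul (norm_nonneg x)]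
          norm_num
          rw [h2p]
        rw [← h2]; exact h1
      have hφ0 : (0:ℝ) ≤ (‖x‖ ^ 2 + ee n ^ 2) ^ p := Real.rpow_nonneg (by positivity) _
      have h1 : -(2 * f x * fderiv ℝ f x x * (‖x‖ ^ 2 + ee n ^ 2) ^ p)
          ≤ 2 * (|f x| * (|fderiv ℝ f x x| * (‖x‖ ^ 2 + ee n ^ 2) ^ p)) := by
        have habs : |2 * f x * fderiv ℝ f x x * (‖x‖ ^ 2 + ee n ^ 2) ^ p|
            = 2 * (|f x| * (|fderiv ℝ f x x| * (‖x‖ ^ 2 + ee n ^ 2) ^ p)) := by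
          rw [abs_mul, abs_mul, abs_mul, abs_of_nonneg hφ0, abs_two]
          ring
        exact (neg_le_abs _).trans habs.le
      refine h1.trans ?_
      have h2 : |fderiv ℝ f x x| * (‖x‖ ^ 2 + ee n ^ 2) ^ p
          ≤ (‖gradient f x‖ * ‖x‖) * (‖x‖ ^ 2 + ee n ^ 2) ^ p :=
        mul_le_mul_of_nonneg_right hAle hφ0
      have h3 : ‖x‖ * (‖x‖ ^ 2 + ee n ^ 2) ^ p ≤ R * w x :=
        mul_le_mul hxR hφw hφ0 hR0.le
      calc 2 * (|f x| * (|fderiv ℝ f x x| * (‖x‖ ^ 2 + ee n ^ 2) ^ p))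
          ≤ 2 * (|f x| * ((‖gradient f x‖ * ‖x‖) * (‖x‖ ^ 2 + ee n ^ 2) ^ p)) := by
            have := mul_le_mul_of_nonneg_left h2 (abs_nonneg (f x))
            linarith
        _ = 2 * (|f x| * ‖gradient f x‖ * (‖x‖ * (‖x‖ ^ 2 + ee n ^ 2) ^ p)) := by ring
        _ ≤ 2 * (|f x| * ‖gradient f x‖ * (R * w x)) := by
            have hfg : (0:ℝ) ≤ |f x| * ‖gradient f x‖ :=
              mul_nonneg (abs_nonneg _) (norm_nonneg _)
            have := mul_le_mul_of_nonneg_left h3 hfg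
            linarith
        _ = 2 * R * (w x * (|f x| * ‖gradient f x‖)) := by ring
    · rw [hf0 x hxK, hgrad0 x hxK]
      simp
  -- the key inequality for each n
  have hstep : ∀ n : ℕ, (∫ x : E, Sn n x)
      ≤ 2 * R * ∫ x : E, w x * (|f x| * ‖gradient f x‖) := by
    intro n
    have hid := div_identity f hf hfcs (hee0 n)
    rw [← hp] at hid
    calc (∫ x : E, Sn n x)
        ≤ ∫ x : E, f x ^ 2 * (‖x‖ ^ 2 + ee n ^ 2) ^ (p - 1)
            * (2 * ‖x‖ ^ 2 + (N:ℝ) * ee n ^ 2) := by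
          refine integral_mono (hSn_int n) (hRHS_int n) fun x => ?_
          simp only [hSn]
          have h1 : (0:ℝ) ≤ f x ^ 2 * (‖x‖ ^ 2 + ee n ^ 2) ^ (p - 1) :=
            mul_nonneg (sq_nonneg _) (Real.rpow_nonneg (by linarith [pow_pos (hee0 n) 2, sq_nonneg ‖x‖]) _)
          have h2 : (0:ℝ) ≤ (N:ℝ) * ee n ^ 2 := by
            have := hee0 n
            have : (0:ℝ) ≤ (N:ℝ) := Nat.cast_nonneg N
            nlinarith [sq_nonneg (ee n)]
          nlinarith [mul_nonneg h1 h2]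
      _ = - ∫ x : E, 2 * f x * fderiv ℝ f x x * (‖x‖ ^ 2 + ee n ^ 2) ^ p := hid
      _ = ∫ x : E, -(2 * f x * fderiv ℝ f x x * (‖x‖ ^ 2 + ee n ^ 2) ^ p) := by
          rw [integral_neg]
      _ ≤ ∫ x : E, 2 * R * (w x * (|f x| * ‖gradient f x‖)) := by
          refine integral_mono_ae (hT1_int n).neg (hM_int.const_mul (2*R)) ?_
          filter_upwards [h0ae] with x hx
          exact hbound n x hx
      _ = 2 * R * ∫ x : E, w x * (|f x| * ‖gradient f x‖) := integral_const_mul _ _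
  -- monotone convergence
  have hmono : ∀ x : E, Monotone fun n : ℕ => Sn n x := by
    intro x m n hmn
    simp only [hSn]
    by_cases hx : x = (0:E)
    · subst hx; simp
    · have hx2 : (0:ℝ) < ‖x‖ ^ 2 := by
        have : 0 < ‖x‖ := norm_pos_iff.2 hx
        positivity
      have hmono_e : ee n ≤ ee m := by
        rw [hee]
        apply one_div_le_one_div_of_le (by positivity)
        have : (m:ℝ) ≤ n := by exact_mod_cast hmn
        linarith
      have hrp : (‖x‖ ^ 2 + ee m ^ 2) ^ (p - 1) ≤ (‖x‖ ^ 2 + ee n ^ 2) ^ (p - 1) := by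
        refine Real.rpow_le_rpow_of_nonpos
          (by linarith [pow_pos (hee0 n) 2, sq_nonneg ‖x‖]) ?_ (by linarith)
        have h1 : ee n ^ 2 ≤ ee m ^ 2 := pow_le_pow_left₀ (hee0 n).le hmono_e 2
        linarith
      have h5 := mul_le_mul_of_nonneg_left hrp (sq_nonneg (f x))
      exact mul_le_mul_of_nonneg_right h5 (by positivity)
  have htend : ∀ᵐ x : E ∂volume,
      Filter.Tendsto (fun n => Sn n x) atTop (nhds (2 * (w x * f x ^ 2))) := by
    filter_upwards [h0ae] with x hx
    have hx0 : 0 < ‖x‖ := norm_pos_iff.2 hx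
    have h1 : Filter.Tendsto (fun n : ℕ => ‖x‖ ^ 2 + ee n ^ 2) atTop (nhds (‖x‖ ^ 2)) := by
      have h0' : Filter.Tendsto ee atTop (nhds 0) := by
        rw [hee]; exact tendsto_one_div_add_atTop_nhds_zero_nat
      have h2' : Filter.Tendsto (fun n => ee n ^ 2) atTop (nhds 0) := by
        have := h0'.pow 2
        simpa using this
      have := tendsto_const_nhds (x := ‖x‖ ^ 2) (f := atTop (α := ℕ)) |>.add h2'
      simpa using this
    have h2 : Filter.Tendsto (fun n : ℕ => (‖x‖ ^ 2 + ee n ^ 2) ^ (p - 1)) atTop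
        (nhds ((‖x‖ ^ 2) ^ (p - 1))) := by
      have hc : ContinuousAt (fun y : ℝ => y ^ (p - 1)) (‖x‖ ^ 2) :=
        Real.continuousAt_rpow_const _ _ (Or.inl (by positivity))
      exact hc.tendsto.comp h1
    have h3 : Filter.Tendsto (fun n => Sn n x) atTop
        (nhds (f x ^ 2 * (‖x‖ ^ 2) ^ (p - 1) * (2 * ‖x‖ ^ 2))) := by
      simp only [hSn]
      exact (tendsto_const_nhds.mul h2).mul tendsto_const_nhds
    have heq : f x ^ 2 * (‖x‖ ^ 2) ^ (p - 1) * (2 * ‖x‖ ^ 2) = 2 * (w x * f x ^ 2) := by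
      have hxx : ((‖x‖:ℝ) ^ 2) ^ (p - 1) * ‖x‖ ^ 2 = w x := by
        rw [hw, ← Real.rpow_natCast ‖x‖ 2, ← Real.rpow_mul (norm_nonneg x),
          ← Real.rpow_add hx0]
        norm_num
        rw [show (2:ℝ) * (p-1) + 2 = 2 * p by ring, h2p]
      calc f x ^ 2 * (‖x‖ ^ 2) ^ (p - 1) * (2 * ‖x‖ ^ 2)
          = 2 * (((‖x‖:ℝ) ^ 2) ^ (p - 1) * ‖x‖ ^ 2 * f x ^ 2) := by ring
        _ = 2 * (w x * f x ^ 2) := by rw [hxx]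
    rw [← heq]
    exact h3
  have hFint : Integrable (fun x : E => 2 * (w x * f x ^ 2)) volume := hA_int.const_mul 2
  have hMCT := integral_tendsto_of_tendsto_of_monotone hSn_int hFint
    (Filter.Eventually.of_forall hmono) htend
  have hlim : (∫ x : E, 2 * (w x * f x ^ 2))
      ≤ 2 * R * ∫ x : E, w x * (|f x| * ‖gradient f x‖) :=
    le_of_tendsto hMCT (Filter.Eventually.of_forall hstep)
  rw [integral_const_mul] at hlim
  -- Cauchy-Schwarz
  have hpq : Real.HolderConjugate 2 2 := ⟨by norm_num, by norm_num, by norm_num⟩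
  set f₁ : E → ℝ := fun x => Real.sqrt (w x) * |f x| with hf₁
  set g₁ : E → ℝ := fun x => Real.sqrt (w x) * ‖gradient f x‖ with hg₁
  have hmeasw : Measurable fun x : E => Real.sqrt (w x) :=
    continuous_sqrt.measurable.comp (measurable_norm.pow_const _)
  have hm1 : MemLp f₁ (ENNReal.ofReal 2) volume := by
    rw [ENNReal.ofReal_ofNat]
    refine (memLp_two_iff_integrable_sq ?_).2 ?_
    · exact (hmeasw.mul hf.continuous.abs.measurable).aestronglyMeasurable
    · refine hA_int.congr (Filter.Eventually.of_forall fun x => ?_)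
      rw [hf₁]
      simp only []
      rw [mul_pow, Real.sq_sqrt (hw0 x), sq_abs]
  have hm2 : MemLp g₁ (ENNReal.ofReal 2) volume := by
    rw [ENNReal.ofReal_ofNat]
    refine (memLp_two_iff_integrable_sq ?_).2 ?_
    · exact (hmeasw.mul hgradcont.norm.measurable).aestronglyMeasurable
    · refine hB_int.congr (Filter.Eventually.of_forall fun x => ?_)
      rw [hg₁]
      simp only []
      rw [mul_pow, Real.sq_sqrt (hw0 x)]
  have hCS := integral_mul_le_Lp_mul_Lq_of_nonneg hpq
    (Filter.Eventually.of_forall fun x => by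
      exact mul_nonneg (Real.sqrt_nonneg _) (abs_nonneg _))
    (Filter.Eventually.of_forall fun x => by
      exact mul_nonneg (Real.sqrt_nonneg _) (norm_nonneg _))
    hm1 hm2
  have hfg_eq : (∫ x : E, f₁ x * g₁ x) = ∫ x : E, w x * (|f x| * ‖gradient f x‖) := by
    refine integral_congr_ae (Filter.Eventually.of_forall fun x => ?_)
    rw [hf₁, hg₁]
    simp only []
    calc Real.sqrt (w x) * |f x| * (Real.sqrt (w x) * ‖gradient f x‖)
        = Real.sqrt (w x) * Real.sqrt (w x) * (|f x| * ‖gradient f x‖) := by ring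
      _ = w x * (|f x| * ‖gradient f x‖) := by rw [Real.mul_self_sqrt (hw0 x)]
  have hf1sq : (∫ x : E, f₁ x ^ (2:ℝ)) = ∫ x : E, w x * f x ^ 2 := by
    refine integral_congr_ae (Filter.Eventually.of_forall fun x => ?_)
    rw [hf₁]
    simp only []
    rw [Real.rpow_two, mul_pow, Real.sq_sqrt (hw0 x), sq_abs]
  have hg1sq : (∫ x : E, g₁ x ^ (2:ℝ)) = ∫ x : E, w x * ‖gradient f x‖ ^ 2 := by
    refine integral_congr_ae (Filter.Eventually.of_forall fun x => ?_)
    rw [hg₁]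
    simp only []
    rw [Real.rpow_two, mul_pow, Real.sq_sqrt (hw0 x)]
  rw [hfg_eq, hf1sq, hg1sq] at hCS
  -- final algebra
  set A := ∫ x : E, w x * f x ^ 2 with hA
  set B := ∫ x : E, w x * ‖gradient f x‖ ^ 2 with hB
  have hA0 : 0 ≤ A := integral_nonneg fun x => mul_nonneg (hw0 x) (sq_nonneg _)
  have hB0 : 0 ≤ B := integral_nonneg fun x => mul_nonneg (hw0 x) (sq_nonneg _)
  have hAle : A ≤ R * (A ^ ((1:ℝ)/2) * B ^ ((1:ℝ)/2)) := by
    have h1 : 2 * A ≤ 2 * R * (A ^ ((1:ℝ)/2) * B ^ ((1:ℝ)/2)) := by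
      calc 2 * A ≤ 2 * R * ∫ x : E, w x * (|f x| * ‖gradient f x‖) := hlim
        _ ≤ 2 * R * (A ^ ((1:ℝ)/2) * B ^ ((1:ℝ)/2)) := by
            refine mul_le_mul_of_nonneg_left ?_ (by linarith)
            exact hCS
    linarith
  rcases eq_or_lt_of_le hA0 with hA0' | hA0'
  · rw [← hA0']
    positivity
  · rcases eq_or_lt_of_le hB0 with hB0' | hB0'
    · exfalso
      rw [← hB0'] at hAle
      rw [Real.zero_rpow (by norm_num)] at hAle
      nlinarith
    · have ha : (0:ℝ) < A ^ ((1:ℝ)/2) := Real.rpow_pos_of_pos hA0' _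
      have hb : (0:ℝ) < B ^ ((1:ℝ)/2) := Real.rpow_pos_of_pos hB0' _
      have haa : A ^ ((1:ℝ)/2) * A ^ ((1:ℝ)/2) = A := by
        rw [← Real.rpow_add hA0']
        norm_num
      have hbb : B ^ ((1:ℝ)/2) * B ^ ((1:ℝ)/2) = B := by
        rw [← Real.rpow_add hB0']
        norm_num
      have h1 : A ^ ((1:ℝ)/2) ≤ R * B ^ ((1:ℝ)/2) := by nlinarith
      nlinarith


end AuxPoincare

noncomputable section

/-- Poincaré inequality in the weighted space with weight `|x|^{2-N}`. -/
theorem poincare_weighted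
    (N : ℕ) (hN : 3 ≤ N)
    (Ω : Set (EuclideanSpace ℝ (Fin N))) (hΩo : IsOpen Ω) (hΩconn : IsConnected Ω)
    (hΩb : Bornology.IsBounded Ω) (hΩsm : IsC2Domain Ω)
    (h0 : (0 : EuclideanSpace ℝ (Fin N)) ∈ Ω) :
    ∃ C : ℝ, 0 < C ∧
      ∀ f : EuclideanSpace ℝ (Fin N) → ℝ,
        ContDiff ℝ (⊤ : ℕ∞) f → HasCompactSupport f → tsupport f ⊆ Ω →
        (∫ x in Ω, ‖x‖ ^ (2 - (N : ℝ)) * f x ^ 2) ≤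
          C * ∫ x in Ω, ‖x‖ ^ (2 - (N : ℝ)) * ‖gradient f x‖ ^ 2 := by
  exact poincare_weighted' hN Ω hΩb

end
end
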